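/- Let F̂⁰,…,F̂^{N−1} be sound certifiable classifiers and w ∈ [0,1]^N, and let Ê be the weighted voting ensemble. If Êᶜ(x) = true and j₁ = Êᴸ(x), then for every x' with ‖x' − x‖ ≤ ε and every label j₂ ≠ j₁, the votes at x' satisfy the strict inequality v_{x'}^w(j₁) > v_{x'}^w(j₂); in particular j₁ is the unique maximizer of v_{x'}^w(·) at every point of the ε-ball around x. -/
import Mathlib



/-- The input space ℝ^d with the Euclidean norm. -/
abbrev Inp (d : ℕ) := EuclideanSpace ℝ (Fin d)

/-- A certifiable classifier `F : ℝ^d → Y × Bool` is sound if whenever its certificate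
component is `true` at `x`, its label component is constant on the ε-ball around `x`. -/
def Sound {d m : ℕ} (ε : ℝ) (F : Inp d → Fin m × Bool) : Prop :=
  ∀ x x' : Inp d, (F x).2 = true → ‖x' - x‖ ≤ ε → (F x').1 = (F x).1

/-- The cascading ensemble: return the output of the constituent with the least index whose
certificate is `true`, defaulting to the last constituent if none is certified. -/
def cascade {d m N : ℕ} (hN : 0 < N) (F : Fin N → Inp d → Fin m × Bool) (x : Inp d) :
    Fin m × Bool :=
  if h : (Finset.univ.filter fun j => (F j x).2 = true).Nonempty then
    F ((Finset.univ.filter fun j => (F j x).2 = true).min' h) x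
  else
    F ⟨N - 1, Nat.sub_lt hN Nat.one_pos⟩ x

/-- `vote F w x j c`: total weight of constituents outputting `(j, c)` at `x`. -/
noncomputable def vote {d m N : ℕ} (F : Fin N → Inp d → Fin m × Bool) (w : Fin N → ℝ)
    (x : Inp d) (j : Fin m) (c : Bool) : ℝ :=
  ∑ i : Fin N, w i * (if F i x = (j, c) then 1 else 0)

/-- `voteTotal F w x j = v_x^w(j)`: total vote for label `j` regardless of certificate. -/
noncomputable def voteTotal {d m N : ℕ} (F : Fin N → Inp d → Fin m × Bool) (w : Fin N → ℝ)
    (x : Inp d) (j : Fin m) : ℝ :=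
  vote F w x j false + vote F w x j true

/-- `voteNC F w x = v_x^w(*, false)`: total vote carrying a `false` certificate. -/
noncomputable def voteNC {d m N : ℕ} (F : Fin N → Inp d → Fin m × Bool) (w : Fin N → ℝ)
    (x : Inp d) : ℝ :=
  ∑ j : Fin m, vote F w x j false

/-- The label of the weighted voting ensemble: the least `j` maximizing `v_x^w(j)`. -/
noncomputable def ensLabel {d m N : ℕ} (hm : 0 < m) (F : Fin N → Inp d → Fin m × Bool)
    (w : Fin N → ℝ) (x : Inp d) : Fin m :=
  (Finset.univ.filter fun j => ∀ k, voteTotal F w x k ≤ voteTotal F w x j).min'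
    (by
      obtain ⟨b, _, hb⟩ := Finset.exists_max_image (Finset.univ : Finset (Fin m))
        (voteTotal F w x) ⟨⟨0, hm⟩, Finset.mem_univ _⟩
      exact ⟨b, Finset.mem_filter.mpr ⟨Finset.mem_univ _, fun k => hb k (Finset.mem_univ _)⟩⟩)

open Classical in
/-- The certificate of the weighted voting ensemble. -/
noncomputable def ensCert {d m N : ℕ} (hm : 0 < m) (F : Fin N → Inp d → Fin m × Bool)
    (w : Fin N → ℝ) (x : Inp d) : Bool :=
  if ∀ j : Fin m, j ≠ ensLabel hm F w x →
      voteNC F w x + vote F w x j true < vote F w x (ensLabel hm F w x) true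
  then true else false

/-- The weighted voting ensemble. -/
noncomputable def ensemble {d m N : ℕ} (hm : 0 < m) (F : Fin N → Inp d → Fin m × Bool)
    (w : Fin N → ℝ) (x : Inp d) : Fin m × Bool :=
  (ensLabel hm F w x, ensCert hm F w x)


lemma voteTotal_eq' {d m N : ℕ} (F : Fin N → Inp d → Fin m × Bool) (w : Fin N → ℝ)
    (x : Inp d) (j : Fin m) :
    voteTotal F w x j = ∑ i, w i * (if (F i x).1 = j then 1 else 0) := by
  unfold voteTotal vote
  rw [← Finset.sum_add_distrib]
  refine Finset.sum_congr rfl fun i _ => ?_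
  rcases hF : F i x with ⟨a, b⟩
  by_cases h : a = j <;> cases b <;> simp [Prod.ext_iff, h]

lemma voteNC_eq' {d m N : ℕ} (F : Fin N → Inp d → Fin m × Bool) (w : Fin N → ℝ)
    (x : Inp d) :
    voteNC F w x = ∑ i, w i * (if (F i x).2 = false then 1 else 0) := by
  unfold voteNC vote
  rw [Finset.sum_comm]
  refine Finset.sum_congr rfl fun i _ => ?_
  rw [← Finset.mul_sum]
  congr 1
  rcases hF : F i x with ⟨a, b⟩
  cases b
  · simp [Prod.ext_iff]
  · simp [Prod.ext_iff]

theorem certified_label_unique_max_in_ball (d m N : ℕ) (hd : 1 ≤ d) (hm : 2 ≤ m)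
    (ε : ℝ) (hε : 0 < ε)
    (F : Fin N → Inp d → Fin m × Bool) (w : Fin N → ℝ)
    (hw : ∀ i, w i ∈ Set.Icc (0 : ℝ) 1)
    (hsound : ∀ i, Sound ε (F i))
    (x : Inp d)
    (hc : (ensemble (show 0 < m by omega) F w x).2 = true) :
    ∀ x' : Inp d, ‖x' - x‖ ≤ ε →
      ∀ j₂ : Fin m, j₂ ≠ (ensemble (show 0 < m by omega) F w x).1 →
        voteTotal F w x' j₂ <
          voteTotal F w x' ((ensemble (show 0 < m by omega) F w x).1) := by
  intro x' hx' j₂ hj₂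
  have hm0 : 0 < m := by omega
  set j₁ := ensLabel (show 0 < m by omega) F w x with hj₁
  have hcert : ∀ j : Fin m, j ≠ j₁ →
      voteNC F w x + vote F w x j true < vote F w x j₁ true := by
    have hc' : ensCert (show 0 < m by omega) F w x = true := hc
    unfold ensCert at hc'
    split_ifs at hc' with h
    exact h
  have h3 := hcert j₂ hj₂
  have h1 : voteTotal F w x' j₂ ≤ voteNC F w x + vote F w x j₂ true := by
    rw [voteTotal_eq', voteNC_eq']
    unfold vote
    rw [← Finset.sum_add_distrib]
    refine Finset.sum_le_sum fun i _ => ?_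
    have hw0 := (hw i).1
    by_cases h : (F i x').1 = j₂
    · by_cases hb : (F i x).2 = false
      · have : (0:ℝ) ≤ w i * (if F i x = (j₂, true) then 1 else 0) := by positivity
        simp only [h, hb, if_pos rfl]
        linarith
      · have hb' : (F i x).2 = true := by simpa using hb
        have hlab : (F i x).1 = j₂ := by
          rw [← hsound i x x' hb' hx', h]
        have hFx : F i x = (j₂, true) := Prod.ext hlab hb'
        simp [h, hFx]
    · have h1 : (0:ℝ) ≤ w i * (if (F i x).2 = false then 1 else 0) := by positivity
      have h2 : (0:ℝ) ≤ w i * (if F i x = (j₂, true) then 1 else 0) := by positivity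
      rw [if_neg h, mul_zero]
      linarith
  have h2 : vote F w x j₁ true ≤ voteTotal F w x' j₁ := by
    rw [voteTotal_eq']
    unfold vote
    refine Finset.sum_le_sum fun i _ => ?_
    have hw0 := (hw i).1
    by_cases h : F i x = (j₁, true)
    · have hlab : (F i x').1 = j₁ := by
        rw [hsound i x x' (by rw [h]) hx', h]
      simp [h, hlab]
    · have : (0:ℝ) ≤ w i * (if (F i x').1 = j₁ then 1 else 0) := by positivity
      rw [if_neg h, mul_zero]
      linarith
  show voteTotal F w x' j₂ < voteTotal F w x' j₁
  linarith
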